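/- arXiv:1412.5655 — 4 statements merged into one kernel-verified Lean document; each statement's English description precedes it below -/
import Mathlib

section
/- For every odd integer m ≥ 1 and every integer k ≥ 1, there exists a monotone function h : [m]^k → {−1,1} such that |{x ∈ [m]^k : h(x) = 1}| = |{x ∈ [m]^k : h(x) = −1}| + 1, together with an injective map Ψ : h⁻¹(−1) → h⁻¹(1) satisfying x ≺ Ψ(x) for every x ∈ h⁻¹(−1). -/
open Finset

/-- `h` is monotone (identifying `false ↦ -1`, `true ↦ 1`; the domain `[m]^k` is
encoded as `Fin k → Fin m`, ordered coordinatewise). -/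
def IsMono {α : Type*} [Preorder α] (f : α → Bool) : Prop :=
  ∀ x y : α, x ≤ y → f x ≤ f y

/-- Strict coordinatewise domination: `x ≼ y` and `x ≠ y`. -/
def StrictBelow {k m : ℕ} (x y : Fin k → Fin m) : Prop :=
  (∀ i, x i ≤ y i) ∧ x ≠ y

/-! Write `m = 2t + 1`, let `c = (t, …, t)` be the centre of the grid and let `h x = 1` iff
`c ≤ x` in the lexicographic order, which extends the coordinatewise order, so `h` is monotone.
The reflection `a ↦ 2t - a` in every coordinate reverses the lexicographic order and fixes `c`,
so it pairs the points below `c` with those above it, and `c` is the extra point with `h = 1`.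
For `x` below `c`, `Ψ x` reflects the first coordinate where `x` deviates from `c`; that
coordinate is below `t`, so it moves up and `Ψ x` lands above both `x` and `c`, and it is still
the first coordinate where `Ψ x` deviates from `c`, which makes `Ψ` injective. -/

open Function

section Reflection

variable {α : Type*} [LinearOrder α] [Fintype α]

theorem card_le_eq_card_lt_add_one_of_strictAnti_involutive {σ : α → α} (hσ : StrictAnti σ)
    (hinv : Involutive σ) {c : α} (hc : σ c = c) :
    #{x | c ≤ x} = #{x | x < c} + 1 := by
  have hsplit : filter (c ≤ ·) univ = insert c (filter (c < ·) univ) := by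
    ext x
    simp [le_iff_lt_or_eq, eq_comm, or_comm]
  rw [hsplit, card_insert_of_notMem (by simp)]
  congr 1
  exact card_equiv (hinv.toPerm σ) fun x => by simp [← hσ.lt_iff_gt (a := x), hc]

end Reflection

section Lex

variable {ι β : Type*} [LinearOrder ι] [LinearOrder β] {r : β → β}

theorem StrictAnti.toLex_comp_ofLex (hr : StrictAnti r) :
    StrictAnti fun x : Lex (ι → β) => toLex (r ∘ ofLex x) := by
  rintro x y ⟨i, hpre, hi⟩
  exact ⟨i, fun j hj => congrArg r (hpre j hj).symm, hr hi⟩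

theorem card_toLex_le_eq_card_not_toLex_le_add_one [Fintype ι] [Fintype β] (hr : StrictAnti r)
    (hinv : Involutive r) {c : ι → β} (hc : ∀ i, r (c i) = c i) :
    #{x : ι → β | toLex c ≤ toLex x} = #{x : ι → β | ¬toLex c ≤ toLex x} + 1 := by
  have hlex (p : Lex (ι → β) → Prop) [DecidablePred p] :
      #{x : ι → β | p (toLex x)} = #{y | p y} :=
    card_equiv toLex fun _ => by simp
  rw [hlex (toLex c ≤ ·), hlex (¬toLex c ≤ ·)]
  simp only [not_le]
  exact card_le_eq_card_lt_add_one_of_strictAnti_involutive (σ := fun x => toLex (r ∘ ofLex x))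
    hr.toLex_comp_ofLex
    (fun x => congrArg toLex (funext fun i => hinv (x i))) (congrArg toLex (funext hc))

theorem isLeast_ne_of_forall_lt_eq {γ : Type*} {x y : ι → γ} {i : ι}
    (h : ∀ j < i, x j = y j) (hi : x i ≠ y i) : IsLeast {j | x j ≠ y j} i :=
  ⟨hi, fun _ hj => not_lt.1 fun hji => hj (h _ hji)⟩

theorem exists_injOn_toLex_lt_of_strictAnti_involutive (hr : StrictAnti r) (hinv : Involutive r)
    {c : ι → β} (hc : ∀ i, r (c i) = c i) :
    ∃ Ψ : (ι → β) → ι → β, Set.InjOn Ψ {x | toLex x < toLex c} ∧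
      ∀ x, toLex x < toLex c → toLex c < toLex (Ψ x) ∧ x < Ψ x := by
  classical
  choose i hpre hlt using fun x (hx : toLex x < toLex c) =>
    (hx : ∃ i, (∀ j < i, x j = c j) ∧ x i < c i)
  have hreflect : ∀ x hx, c (i x hx) < r (x (i x hx)) := fun x hx => hc (i x hx) ▸ hr (hlt x hx)
  let Ψ x := if hx : toLex x < toLex c then update x (i x hx) (r (x (i x hx))) else x
  have hΨ : ∀ x hx, Ψ x = update x (i x hx) (r (x (i x hx))) := fun x hx => dif_pos hx
  have hagree : ∀ x hx, ∀ j < i x hx, Ψ x j = c j := fun x hx j hj => by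
    rw [hΨ x hx, update_of_ne hj.ne]
    exact hpre x hx j hj
  have habove : ∀ x hx, c (i x hx) < Ψ x (i x hx) := fun x hx => by
    rw [hΨ x hx, update_self]
    exact hreflect x hx
  have hfirst : ∀ x hx, IsLeast {j | Ψ x j ≠ c j} (i x hx) := fun x hx =>
    isLeast_ne_of_forall_lt_eq (hagree x hx) (habove x hx).ne'
  refine ⟨Ψ, fun x hx y hy hxy => ?_, fun x hx =>
    ⟨⟨i x hx, fun j hj => (hagree x hx j hj).symm, habove x hx⟩,
      hΨ x hx ▸ lt_update_self_iff.2 ((hlt x hx).trans (hreflect x hx))⟩⟩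
  have hi : i x hx = i y hy := (hfirst x hx).unique (hxy ▸ hfirst y hy)
  rw [hΨ x hx, hΨ y hy, hi] at hxy
  simpa [hinv _] using congrArg (fun z => update z (i y hy) (r (z (i y hy)))) hxy

end Lex

theorem odd_grid_balanced_monotone_matching :
    ∀ m k : ℕ, Odd m → 1 ≤ m → 1 ≤ k →
      ∃ h : (Fin k → Fin m) → Bool, IsMono h ∧
        (Finset.univ.filter (fun x => h x = true)).card =
          (Finset.univ.filter (fun x => h x = false)).card + 1 ∧
        ∃ Ψ : (Fin k → Fin m) → (Fin k → Fin m),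
          Set.InjOn Ψ {x | h x = false} ∧
          ∀ x, h x = false → h (Ψ x) = true ∧ StrictBelow x (Ψ x) := by
  rintro m k ⟨t, rfl⟩ - -
  let c : Fin k → Fin (2 * t + 1) := fun _ => ⟨t, by omega⟩
  have hc : ∀ i, (c i).rev = c i := fun _ => Fin.ext (by simp [c]; omega)
  obtain ⟨Ψ, hinj, hΨ⟩ :=
    exists_injOn_toLex_lt_of_strictAnti_involutive Fin.rev_strictAnti Fin.rev_involutive hc
  refine ⟨fun x => decide (toLex c ≤ toLex x), fun x y hxy => ?_, ?_, Ψ, ?_, fun x hx => ?_⟩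
  · simpa [Bool.le_iff_imp] using fun hx => hx.trans (Pi.toLex_monotone hxy)
  · simpa using card_toLex_le_eq_card_not_toLex_le_add_one Fin.rev_strictAnti Fin.rev_involutive hc
  · exact fun x hx y hy =>
      hinj (not_le.1 (of_decide_eq_false hx)) (not_le.1 (of_decide_eq_false hy))
  · simp only [decide_eq_false_iff_not, not_le, decide_eq_true_eq] at hx ⊢
    obtain ⟨hcΨ, hxΨ⟩ := hΨ x hx
    exact ⟨hcΨ.le, fun i => hxΨ.le i, hxΨ.ne⟩
end

section
/- There exist a universal constant c > 0 and an N such that the following holds for all n ≥ N and all odd integers m ≥ 3. Set k = ⌈log₂ n⌉, and let h : [m]^k → {−1,1} be any monotone function with |h⁻¹(−1)| = (m^k − 1)/2 for which there exist z₀ ∈ h⁻¹(1) and a bijection Ψ from h⁻¹(−1) onto h⁻¹(1) \ {z₀} with x ≺ Ψ(x) for all x ∈ h⁻¹(−1). For f : {−1,1}^n → {−1,1}, define Φ[f] : [m]^{kn} → {−1,1} by Φ[f](x¹,…,xⁿ) = f(h(x¹),…,h(xⁿ)) where each xⁱ ∈ [m]^k. Then: (1) if f is monotone then Φ[f] is monotone;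 and (2) for every ε > 0, if f is ε-far from monotone then Φ[f] is c·ε-far from monotone. -/
open Finset

/-- Normalized Hamming distance between two functions on a finite domain. -/
noncomputable def distB {α : Type*} [Fintype α] (f g : α → Bool) : ℝ :=
  ((Finset.univ.filter (fun x => f x ≠ g x)).card : ℝ) / (Fintype.card α : ℝ)

/-- `f` is `ε`-far from monotone. -/
def FarFromMono {α : Type*} [Fintype α] [Preorder α] (ε : ℝ) (f : α → Bool) : Prop :=
  ∀ g : α → Bool, IsMono g → ε < distB f g

/-- The map `Φ` sending `f : {-1,1}^n → {-1,1}` to `Φ[f] : [m]^{kn} → {-1,1}` defined by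
`Φ[f](x¹,…,xⁿ) = f(h(x¹),…,h(xⁿ))`, where each `xⁱ ∈ [m]^k` and the domain `[m]^{kn}`
is encoded as `Fin n → (Fin k → Fin m)` (ordered coordinatewise). -/
def PhiOdd {n k m : ℕ} (h : (Fin k → Fin m) → Bool) (f : (Fin n → Bool) → Bool) :
    (Fin n → Fin k → Fin m) → Bool :=
  fun x => f (fun i => h (x i))

/-!
A function `f` that is `ε`-far from monotone on the cube has more than `ε 2ⁿ / 2` pairwise
disjoint violated pairs `u ≤ v` (`f u = 1`, `f v = -1`): for a maximal family of such pairs,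
`f` agrees off their endpoints with a monotone function. Each pair lifts to the grid: applying
`Ψ` in the coordinates where `u` and `v` differ injects the fibre of `x ↦ (h(xⁱ))ᵢ` over `u` into
the fibre over `v` and moves every point upwards, so a monotone `g` disagrees with `Φ[f]` at `x`
or at its image. As every fibre of `h` has at least `t = (mᵏ - 1)/2` points, this gives more than
`(ε 2ⁿ / 2) tⁿ` disagreements among `mᵏⁿ` points, and `(2t / mᵏ)ⁿ = (1 - m⁻ᵏ)ⁿ ≥ 1/2` by
Bernoulli's inequality because `mᵏ ≥ 3ᵏ ≥ 2 · 2ᵏ ≥ 2n`.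
-/

theorem distB_le_of_forall_ne_mem {α : Type*} [Fintype α] {f g : α → Bool} {C : Finset α}
    (hC : ∀ x, f x ≠ g x → x ∈ C) : distB f g ≤ (#C : ℝ) / Fintype.card α := by
  unfold distB
  gcongr
  exact fun x hx => hC x (mem_filter.1 hx).2

section ViolationMatching

variable {α : Type*} [Preorder α]

def IsViolationMatching (f : α → Bool) (M : Finset (α × α)) : Prop :=
  (∀ p ∈ M, p.1 ≤ p.2 ∧ f p.1 = true ∧ f p.2 = false) ∧
    (M : Set (α × α)).PairwiseDisjoint fun p => ({p.1, p.2} : Set α)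

theorem IsViolationMatching.insert [DecidableEq α] {f : α → Bool} {M : Finset (α × α)}
    (hM : IsViolationMatching f M) {x y : α} (hxy : x ≤ y) (hx : f x = true) (hy : f y = false)
    (hxM : ∀ p ∈ M, x ≠ p.1 ∧ x ≠ p.2) (hyM : ∀ p ∈ M, y ≠ p.1 ∧ y ≠ p.2) :
    IsViolationMatching f (insert (x, y) M) := by
  refine ⟨?_, ?_⟩
  · simpa [hxy, hx, hy] using hM.1
  · rw [coe_insert]
    refine hM.2.insert fun p hp _ => Set.disjoint_left.2 ?_
    rintro a (rfl | rfl) (rfl | rfl)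
    exacts [(hxM p hp).1 rfl, (hxM p hp).2 rfl, (hyM p hp).1 rfl, (hyM p hp).2 rfl]

theorem IsViolationMatching.fst_ne_snd {f : α → Bool} {M : Finset (α × α)}
    (hM : IsViolationMatching f M) {p : α × α} (hp : p ∈ M) : p.1 ≠ p.2 :=
  ne_of_apply_ne f (by simp [(hM.1 p hp).2.1, (hM.1 p hp).2.2])

variable [Fintype α]

theorem FarFromMono.mono {ε δ : ℝ} {f : α → Bool} (hf : FarFromMono ε f) (hδ : δ ≤ ε) :
    FarFromMono δ f :=
  fun g hg => hδ.trans_lt (hf g hg)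

theorem FarFromMono.exists_isViolationMatching [Nonempty α] {ε : ℝ} {f : α → Bool}
    (hf : FarFromMono ε f) :
    ∃ M, IsViolationMatching f M ∧ ε * Fintype.card α < 2 * #M := by
  classical
  obtain ⟨M, hM, hmax⟩ := exists_max_image ({M | IsViolationMatching f M} : Finset _) card
    ⟨∅, by simp [IsViolationMatching]⟩
  rw [mem_filter] at hM
  set C := M.biUnion fun p => {p.1, p.2}
  have hC : ∀ x, x ∉ C → ∀ p ∈ M, x ≠ p.1 ∧ x ≠ p.2 := by
    intro x hx p hp
    simp only [C, mem_biUnion, mem_insert, mem_singleton, not_exists, not_and, not_or] at hx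
    exact hx p hp
  let g : α → Bool := fun x => decide (∃ y ∉ C, y ≤ x ∧ f y = true)
  have hg : IsMono g := by
    intro x x' hxx'
    simp only [g, Bool.le_iff_imp, decide_eq_true_eq]
    exact fun ⟨y, hyC, hyx, hy⟩ => ⟨y, hyC, hyx.trans hxx', hy⟩
  have hfg : ∀ x, f x ≠ g x → x ∈ C := by
    intro x hfgx
    by_contra hxC
    cases hx : f x
    · obtain ⟨y, hyC, hyx, hy⟩ : ∃ y ∉ C, y ≤ x ∧ f y = true := by simpa [g, hx] using hfgx
      have hyxM : (y, x) ∉ M := fun h => (hC y hyC _ h).1 rfl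
      have := hmax _ (mem_filter.2 ⟨mem_univ _, hM.2.insert hyx hy hx (hC y hyC) (hC x hxC)⟩)
      rw [card_insert_of_notMem hyxM] at this
      omega
    · exact hfgx (by simpa [g, hx] using ⟨x, hxC, le_rfl, hx⟩)
  have hCM : #C ≤ 2 * #M :=
    card_biUnion_le.trans ((sum_le_sum fun _ _ => card_le_two).trans_eq (by simp [mul_comm]))
  refine ⟨M, hM.2, ?_⟩
  have hdist := (hf g hg).trans_le (distB_le_of_forall_ne_mem hfg)
  rw [lt_div_iff₀ (by exact_mod_cast Fintype.card_pos)] at hdist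
  have : (#C : ℝ) ≤ 2 * #M := by exact_mod_cast hCM
  linarith

end ViolationMatching

theorem IsMono.comp_pi {ι β : Type*} [Preorder β] {f : (ι → Bool) → Bool} {h : β → Bool}
    (hf : IsMono f) (hh : IsMono h) : IsMono fun x : ι → β => f fun i => h (x i) :=
  fun _ _ hxy => hf _ _ fun i => hh _ _ (hxy i)

theorem card_le_card_inter_add_card_inter {β : Type*} [DecidableEq β] {A B W : Finset β}
    {L : β → β} (hmaps : Set.MapsTo L A B) (hinj : Set.InjOn L A)
    (hW : ∀ x ∈ A, x ∈ W ∨ L x ∈ W) : #A ≤ #(A ∩ W) + #(B ∩ W) := by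
  rw [← card_inter_add_card_sdiff A W]
  refine Nat.add_le_add_left (card_le_card_of_injOn L (fun x hx => ?_)
    (hinj.mono fun x hx => (mem_sdiff.1 hx).1)) _
  obtain ⟨hxA, hxW⟩ := mem_sdiff.1 hx
  exact mem_inter.2 ⟨hmaps hxA, (hW x hxA).resolve_left hxW⟩

section CoordFiber

variable {ι β : Type*} [Fintype ι] [DecidableEq ι] [Fintype β] (h : β → Bool)

def coordFiber (u : ι → Bool) : Finset (ι → β) :=
  {x | (fun i => h (x i)) = u}

variable {h}

theorem mem_coordFiber {u : ι → Bool} {x : ι → β} :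
    x ∈ coordFiber h u ↔ (fun i => h (x i)) = u := by
  simp [coordFiber]

theorem card_coordFiber (u : ι → Bool) : #(coordFiber h u) = ∏ i, #{b | h b = u i} := by
  rw [← Fintype.card_coe, Fintype.card_congr ((Equiv.subtypeEquivRight fun x => by
    rw [mem_coordFiber, funext_iff]).trans (Equiv.subtypePiEquivPi (p := fun i b => h b = u i))),
    Fintype.card_pi]
  exact prod_congr rfl fun i _ => Fintype.card_subtype _

theorem pow_le_card_coordFiber {t : ℕ} (ht : ∀ b, t ≤ #{y | h y = b}) (u : ι → Bool) :
    t ^ Fintype.card ι ≤ #(coordFiber h u) := by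
  rw [card_coordFiber, ← Finset.card_univ, ← prod_const]
  exact prod_le_prod' fun i _ => ht (u i)

def raise (Ψ : β → β) (u v : ι → Bool) (x : ι → β) : ι → β :=
  fun i => if u i = v i then x i else Ψ (x i)

variable {Ψ : β → β} {u v : ι → Bool} {x : ι → β}

theorem apply_eq_false_of_mem_coordFiber (huv : u ≤ v) (hx : x ∈ coordFiber h u) {i : ι}
    (hi : u i ≠ v i) : h (x i) = false :=
  (congrFun (mem_coordFiber.1 hx) i).trans (Bool.lt_iff.1 (lt_of_le_of_ne (huv i) hi)).1

theorem raise_mem_coordFiber (hmaps : Set.MapsTo Ψ {b | h b = false} {b | h b = true})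
    (huv : u ≤ v) (hx : x ∈ coordFiber h u) : raise Ψ u v x ∈ coordFiber h v := by
  refine mem_coordFiber.2 (funext fun i => ?_)
  by_cases hi : u i = v i
  · simp only [raise, if_pos hi]
    exact (congrFun (mem_coordFiber.1 hx) i).trans hi
  · simp only [raise, if_neg hi]
    exact (hmaps (apply_eq_false_of_mem_coordFiber huv hx hi)).trans
      (Bool.lt_iff.1 (lt_of_le_of_ne (huv i) hi)).2.symm

theorem injOn_raise (hinj : Set.InjOn Ψ {b | h b = false}) (huv : u ≤ v) :
    Set.InjOn (raise Ψ u v) (coordFiber h u) := by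
  intro x hx y hy hxy
  funext i
  have hxyi := congrFun hxy i
  by_cases hi : u i = v i
  · simpa only [raise, if_pos hi] using hxyi
  · simp only [raise, if_neg hi] at hxyi
    exact hinj (apply_eq_false_of_mem_coordFiber huv hx hi)
      (apply_eq_false_of_mem_coordFiber huv hy hi) hxyi

theorem le_raise [Preorder β] (hle : ∀ b, h b = false → b ≤ Ψ b) (huv : u ≤ v)
    (hx : x ∈ coordFiber h u) : x ≤ raise Ψ u v x := by
  intro i
  by_cases hi : u i = v i
  · simp only [raise, if_pos hi, le_refl]
  · simpa only [raise, if_neg hi] using hle _ (apply_eq_false_of_mem_coordFiber huv hx hi)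

theorem sum_card_inter_coordFiber_le [DecidableEq β] {M : Finset ((ι → Bool) × (ι → Bool))}
    (hM : (M : Set ((ι → Bool) × (ι → Bool))).PairwiseDisjoint
      fun p => ({p.1, p.2} : Set (ι → Bool)))
    (hne : ∀ p ∈ M, p.1 ≠ p.2) (W : Finset (ι → β)) :
    ∑ p ∈ M, (#(coordFiber h p.1 ∩ W) + #(coordFiber h p.2 ∩ W)) ≤ #W := by
  have hdisj : ∀ p ∈ M, Disjoint (coordFiber h p.1 ∩ W) (coordFiber h p.2 ∩ W) :=
    fun p hp => disjoint_left.2 fun x hx1 hx2 => hne p hp <|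
      (mem_coordFiber.1 (mem_inter.1 hx1).1).symm.trans (mem_coordFiber.1 (mem_inter.1 hx2).1)
  have hpair : (M : Set ((ι → Bool) × (ι → Bool))).PairwiseDisjoint
      fun p => coordFiber h p.1 ∩ W ∪ coordFiber h p.2 ∩ W := by
    intro p hp q hq hpq
    refine disjoint_left.2 fun x hxp hxq => ?_
    simp only [mem_union, mem_inter, mem_coordFiber] at hxp hxq
    refine Set.disjoint_left.1 (hM hp hq hpq)
      (?_ : (fun i => h (x i)) ∈ ({p.1, p.2} : Set _)) (?_ : _ ∈ ({q.1, q.2} : Set _)) <;> grind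
  calc ∑ p ∈ M, (#(coordFiber h p.1 ∩ W) + #(coordFiber h p.2 ∩ W))
      = ∑ p ∈ M, #(coordFiber h p.1 ∩ W ∪ coordFiber h p.2 ∩ W) :=
        sum_congr rfl fun p hp => (card_union_of_disjoint (hdisj p hp)).symm
    _ = #(M.biUnion fun p => coordFiber h p.1 ∩ W ∪ coordFiber h p.2 ∩ W) :=
        (card_biUnion hpair).symm
    _ ≤ #W := card_le_card (biUnion_subset.2 fun _ _ =>
        union_subset inter_subset_right inter_subset_right)

end CoordFiber

section Transfer

variable {ι β : Type*} [Fintype ι] [DecidableEq ι] [Fintype β] [DecidableEq β] [Preorder β]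
  {h : β → Bool} {Ψ : β → β}

theorem card_coordFiber_le_card_disagreements
    (hmaps : Set.MapsTo Ψ {b | h b = false} {b | h b = true})
    (hinj : Set.InjOn Ψ {b | h b = false}) (hle : ∀ b, h b = false → b ≤ Ψ b)
    {f : (ι → Bool) → Bool} {g : (ι → β) → Bool} (hg : IsMono g) {u v : ι → Bool} (huv : u ≤ v)
    (hu : f u = true) (hv : f v = false) :
    #(coordFiber h u) ≤ #(coordFiber h u ∩ ({x | f (fun i => h (x i)) ≠ g x} : Finset _)) +
      #(coordFiber h v ∩ ({x | f (fun i => h (x i)) ≠ g x} : Finset _)) := by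
  refine card_le_card_inter_add_card_inter (fun x hx => raise_mem_coordFiber hmaps huv hx)
    (injOn_raise hinj huv) fun x hx => ?_
  have hgx := hg _ _ (le_raise hle huv hx)
  simp only [mem_filter, mem_univ, true_and, mem_coordFiber.1 hx,
    mem_coordFiber.1 (raise_mem_coordFiber hmaps huv hx), hu, hv]
  revert hgx
  cases g x <;> cases g (raise Ψ u v x) <;> decide

theorem FarFromMono.comp_pi {f : (ι → Bool) → Bool} {ε : ℝ} (hf : FarFromMono ε f) {t : ℕ}
    (ht0 : 0 < t) (ht : ∀ b, t ≤ #{y | h y = b})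
    (hmaps : Set.MapsTo Ψ {b | h b = false} {b | h b = true})
    (hinj : Set.InjOn Ψ {b | h b = false}) (hle : ∀ b, h b = false → b ≤ Ψ b) :
    FarFromMono (ε / 2 * (2 * t / Fintype.card β) ^ Fintype.card ι)
      fun x : ι → β => f fun i => h (x i) := by
  intro g hg
  obtain ⟨M, hM, hMcard⟩ := hf.exists_isViolationMatching
  rw [Fintype.card_fun, Fintype.card_bool, Nat.cast_pow, Nat.cast_ofNat] at hMcard
  set W : Finset (ι → β) := {x | f (fun i => h (x i)) ≠ g x}
  set n := Fintype.card ι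
  have hW : #M * t ^ n ≤ #W := calc
    #M * t ^ n = ∑ _p ∈ M, t ^ n := by rw [sum_const, smul_eq_mul]
    _ ≤ ∑ p ∈ M, #(coordFiber h p.1) := sum_le_sum fun p _ => pow_le_card_coordFiber ht p.1
    _ ≤ ∑ p ∈ M, (#(coordFiber h p.1 ∩ W) + #(coordFiber h p.2 ∩ W)) :=
      sum_le_sum fun p hp => card_coordFiber_le_card_disagreements hmaps hinj hle hg
        (hM.1 p hp).1 (hM.1 p hp).2.1 (hM.1 p hp).2.2
    _ ≤ #W := sum_card_inter_coordFiber_le hM.2 (fun p hp => hM.fst_ne_snd hp) W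
  have hβ : (0 : ℝ) < Fintype.card β := mod_cast ht0.trans_le ((ht true).trans (card_le_univ _))
  have hdist : distB (fun x : ι → β => f fun i => h (x i)) g = #W / (Fintype.card β : ℝ) ^ n := by
    rw [distB, Fintype.card_fun, Nat.cast_pow]
  rw [hdist, lt_div_iff₀ (by positivity)]
  calc ε / 2 * (2 * t / Fintype.card β : ℝ) ^ n * (Fintype.card β : ℝ) ^ n
      = ε * 2 ^ n / 2 * (t : ℝ) ^ n := by rw [div_pow, mul_pow]; field_simp
    _ < #M * (t : ℝ) ^ n := by gcongr; linarith
    _ ≤ #W := by exact_mod_cast hW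

end Transfer

theorem two_mul_two_pow_le_three_pow {k : ℕ} (hk : 2 ≤ k) : 2 * 2 ^ k ≤ 3 ^ k := by
  obtain ⟨j, rfl⟩ := Nat.exists_eq_add_of_le hk
  have := Nat.pow_le_pow_left (show 2 ≤ 3 by norm_num) j
  rw [pow_add, pow_add]
  omega

theorem one_half_le_one_sub_inv_pow {R : ℝ} {n : ℕ} (hR : 1 ≤ R) (hn : 2 * n ≤ R) :
    1 / 2 ≤ (1 - R⁻¹) ^ n := by
  have hRinv : R⁻¹ ≤ 1 := inv_le_one_of_one_le₀ hR
  have hbernoulli := one_add_mul_le_pow (a := -R⁻¹) (by linarith) n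
  have hnR : n * R⁻¹ ≤ 1 / 2 := by
    rw [← div_eq_mul_inv, div_le_iff₀ (by linarith)]
    linarith
  rw [← sub_eq_add_neg] at hbernoulli
  linarith

theorem le_card_filter_eq_of_card_filter_eq_false {β : Type*} [Fintype β] {h : β → Bool}
    (hh : #{y | h y = false} = (Fintype.card β - 1) / 2) (b : Bool) :
    (Fintype.card β - 1) / 2 ≤ #{y | h y = b} := by
  have := card_filter_add_card_filter_not (s := univ) (fun y => h y = false)
  simp only [Bool.not_eq_false, card_univ] at this
  cases b <;> omega

theorem FarFromMono.phiOdd {n k m : ℕ} (hm : Odd m) (hm3 : 3 ≤ m) (hk : 2 ≤ k)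
    (hn : n ≤ 2 ^ k) {h : (Fin k → Fin m) → Bool}
    (hcard : #{x | h x = false} = (m ^ k - 1) / 2) {Ψ : (Fin k → Fin m) → Fin k → Fin m}
    (hmaps : Set.MapsTo Ψ {x | h x = false} {x | h x = true})
    (hinj : Set.InjOn Ψ {x | h x = false}) (hle : ∀ x, h x = false → x ≤ Ψ x)
    {f : (Fin n → Bool) → Bool} {ε : ℝ} (hε : 0 ≤ ε) (hf : FarFromMono ε f) :
    FarFromMono (1 / 4 * ε) (PhiOdd h f) := by
  have hgrid : 2 * 2 ^ k ≤ m ^ k :=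
    (two_mul_two_pow_le_three_pow hk).trans (Nat.pow_le_pow_left hm3 k)
  have h2n : 2 * n ≤ m ^ k := by omega
  have hcard_grid : Fintype.card (Fin k → Fin m) = m ^ k := by simp
  obtain ⟨t, ht⟩ := hm.pow (n := k)
  have hfiber : ∀ b, t ≤ #{y | h y = b} := by
    rw [← hcard_grid] at hcard
    simpa [hcard_grid, ht] using le_card_filter_eq_of_card_filter_eq_false hcard
  refine (hf.comp_pi (by have := Nat.one_le_two_pow (n := k); omega) hfiber hmaps hinj hle).mono ?_
  have hhalf := one_half_le_one_sub_inv_pow (R := (m ^ k : ℕ)) (by norm_cast; omega)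
    (by exact_mod_cast h2n)
  have hratio : (2 * t / (m ^ k : ℕ) : ℝ) = 1 - ((m ^ k : ℕ) : ℝ)⁻¹ := by
    rw [ht]; push_cast; field_simp; ring
  rw [hcard_grid, Fintype.card_fin, hratio]
  nlinarith

theorem hypergrid_reduction_odd :
    ∃ c : ℝ, 0 < c ∧ ∃ N : ℕ, ∀ n : ℕ, N ≤ n → ∀ m : ℕ, Odd m → 3 ≤ m →
      ∀ h : (Fin (Nat.clog 2 n) → Fin m) → Bool, IsMono h →
        (Finset.univ.filter (fun x => h x = false)).card = (m ^ (Nat.clog 2 n) - 1) / 2 →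
        (∃ z₀ : Fin (Nat.clog 2 n) → Fin m, h z₀ = true ∧
          ∃ Ψ : (Fin (Nat.clog 2 n) → Fin m) → (Fin (Nat.clog 2 n) → Fin m),
            Set.BijOn Ψ {x | h x = false} ({x | h x = true} \ {z₀}) ∧
            ∀ x, h x = false → StrictBelow x (Ψ x)) →
        ∀ f : (Fin n → Bool) → Bool,
          (IsMono f → IsMono (PhiOdd h f)) ∧
          (∀ ε : ℝ, 0 < ε → FarFromMono ε f → FarFromMono (c * ε) (PhiOdd h f)) := by
  refine ⟨1 / 4, by norm_num, 3, fun n hn m hm hm3 h hh hcard hΨ f =>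
    ⟨fun hf => hf.comp_pi hh, fun ε hε hfar => ?_⟩⟩
  obtain ⟨z₀, -, Ψ, hΨ, hΨlt⟩ := hΨ
  have hk : 2 ≤ Nat.clog 2 n := (Nat.clog_mono_right 2 hn).trans_eq' (by decide)
  exact hfar.phiOdd hm hm3 hk (Nat.le_pow_clog one_lt_two n) hcard
    (hΨ.mapsTo.mono_right Set.sdiff_subset) hΨ.injOn (fun x hx => (hΨlt x hx).1) hε.le
end

section
/- For all n ≥ 1, all ε with 1/n ≤ ε ≤ 1/2, and every subset A ⊆ L_mid: if p is a uniformly random path from 0^n to 1^n, then E[|p_mid ∩ A|] ≥ |A|·√n / 2^n. -/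
open Finset

/-- The Hamming weight `‖x‖₁` of `x ∈ {0,1}^n`. -/
def wt {n : ℕ} (x : Fin n → Bool) : ℕ :=
  (Finset.univ.filter (fun i => x i = true)).card

/-- The Hamming distance `‖x − y‖₁`. -/
def hamm {n : ℕ} (x y : Fin n → Bool) : ℕ :=
  (Finset.univ.filter (fun i => x i ≠ y i)).card

/-- The parameter `d = d(n,ε) = 2⌈√(2n·ln(100/ε))⌉`. -/
noncomputable def dPar (n : ℕ) (ε : ℝ) : ℕ :=
  2 * ⌈Real.sqrt (2 * n * Real.log (100 / ε))⌉₊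

open Classical in
/-- The middle layers `L_mid = {x : (n−d)/2 ≤ ‖x‖₁ ≤ (n+d)/2}`. -/
noncomputable def Lmid (n : ℕ) (ε : ℝ) : Finset (Fin n → Bool) :=
  Finset.univ.filter (fun x =>
    ((n : ℝ) - dPar n ε) / 2 ≤ (wt x : ℝ) ∧ (wt x : ℝ) ≤ ((n : ℝ) + dPar n ε) / 2)

/-- The `j`-th point (from the bottom) of the path from `0^n` to `1^n` determined by the
permutation `π`: its ones are exactly in positions `π(0),…,π(j−1)`. -/
def pathPoint {n : ℕ} (π : Equiv.Perm (Fin n)) (j : ℕ) : Fin n → Bool :=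
  fun i => decide ((π.symm i : ℕ) < j)

/-- The indices `j` of the points of the path `π` lying in the middle layers `L_mid`. -/
noncomputable def pmidIdx (n : ℕ) (ε : ℝ) (π : Equiv.Perm (Fin n)) : Finset ℕ :=
  (Finset.range (n + 1)).filter (fun j => pathPoint π j ∈ Lmid n ε)

/-!
Permuting coordinates shows that a uniformly random path meets the layer of weight `k` in a
uniformly random point, so it passes through a fixed `x` with probability `1 / C(n, ‖x‖₁)`;
as `A ⊆ L_mid`, every such meeting counts in `p_mid ∩ A`. It remains to bound
`√n · C(n, k) ≤ 2ⁿ`, which reduces to `(2m + 1) · C(2m, m)² ≤ 16ᵐ`, an induction on `m`.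
-/

namespace Nat

theorem two_mul_add_one_mul_centralBinom_sq_le (m : ℕ) :
    (2 * m + 1) * centralBinom m ^ 2 ≤ 16 ^ m := by
  induction m with
  | zero => simp
  | succ m ih =>
    have hrec := succ_mul_centralBinom_succ m
    refine le_of_mul_le_mul_left ?_ (show 0 < (m + 1) ^ 2 by positivity)
    calc (m + 1) ^ 2 * ((2 * (m + 1) + 1) * centralBinom (m + 1) ^ 2)
        = (2 * m + 3) * ((m + 1) * centralBinom (m + 1)) ^ 2 := by ring
      _ = 4 * (2 * m + 1) * centralBinom m ^ 2 * ((2 * m + 3) * (2 * m + 1)) := by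
          rw [hrec]; ring
      _ ≤ 4 * (2 * m + 1) * centralBinom m ^ 2 * (4 * (m + 1) ^ 2) :=
          Nat.mul_le_mul_left _ (by nlinarith)
      _ = 16 * (m + 1) ^ 2 * ((2 * m + 1) * centralBinom m ^ 2) := by ring
      _ ≤ 16 * (m + 1) ^ 2 * 16 ^ m := by gcongr
      _ = (m + 1) ^ 2 * 16 ^ (m + 1) := by ring

theorem mul_choose_sq_le_four_pow (n k : ℕ) : n * n.choose k ^ 2 ≤ 4 ^ n := by
  have hmid := choose_le_middle k n
  rcases even_or_odd' n with ⟨m, rfl | rfl⟩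
  · rw [show 2 * m / 2 = m by omega, ← centralBinom_eq_two_mul_choose] at hmid
    calc 2 * m * (2 * m).choose k ^ 2 ≤ (2 * m + 1) * centralBinom m ^ 2 := by
          gcongr; omega
      _ ≤ 16 ^ m := two_mul_add_one_mul_centralBinom_sq_le m
      _ = 4 ^ (2 * m) := by rw [pow_mul]; norm_num
  · rw [show (2 * m + 1) / 2 = m by omega] at hmid
    have hdouble : 2 * (2 * m + 1).choose m = centralBinom (m + 1) := by
      rw [centralBinom_eq_two_mul_choose, show 2 * (m + 1) = 2 * m + 1 + 1 by ring,
        choose_succ_succ, choose_symm_half]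
      ring
    refine le_of_mul_le_mul_left ?_ (show 0 < 4 by norm_num)
    calc 4 * ((2 * m + 1) * (2 * m + 1).choose k ^ 2)
        ≤ (2 * (m + 1) + 1) * (2 * (2 * m + 1).choose m) ^ 2 := by
          nlinarith [Nat.pow_le_pow_left hmid 2]
      _ ≤ 16 ^ (m + 1) := hdouble ▸ two_mul_add_one_mul_centralBinom_sq_le (m + 1)
      _ = 4 * 4 ^ (2 * m + 1) := by rw [pow_succ, pow_succ, pow_mul]; norm_num; ring

end Nat

theorem Real.sqrt_mul_choose_le_two_pow (n k : ℕ) : √n * n.choose k ≤ 2 ^ n := by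
  have h : ((n * n.choose k ^ 2 : ℕ) : ℝ) ≤ ((4 ^ n : ℕ) : ℝ) :=
    Nat.cast_le.mpr (Nat.mul_choose_sq_le_four_pow n k)
  push_cast at h
  calc √n * n.choose k = √(n * n.choose k ^ 2) := by
        rw [Real.sqrt_mul (Nat.cast_nonneg _), Real.sqrt_sq (Nat.cast_nonneg _)]
    _ ≤ √(4 ^ n) := Real.sqrt_le_sqrt h
    _ = 2 ^ n := by
        rw [show (4 : ℝ) ^ n = (2 ^ n) ^ 2 by rw [← pow_mul, mul_comm, pow_mul]; norm_num,
          Real.sqrt_sq (by positivity)]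

section Paths

variable {n : ℕ}

theorem wt_le (x : Fin n → Bool) : wt x ≤ n :=
  (card_filter_le _ _).trans_eq (card_fin n)

theorem wt_pathPoint (π : Equiv.Perm (Fin n)) {j : ℕ} (hj : j ≤ n) : wt (pathPoint π j) = j := by
  have h : #{i | (π.symm i : ℕ) < j} = #{i : Fin n | (i : ℕ) < j} :=
    card_equiv π.symm (by simp)
  simpa [wt, pathPoint, h, Fin.card_filter_val_lt] using hj

theorem card_filter_wt_eq (k : ℕ) : #{x : Fin n → Bool | wt x = k} = n.choose k := by
  calc _ = #(powersetCard k (univ : Finset (Fin n))) := ?_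
    _ = n.choose k := by simp
  refine card_nbij' (fun x => ({i | x i = true} : Finset (Fin n))) (fun s i => decide (i ∈ s))
    ?_ ?_ ?_ ?_
  · intro x hx
    simpa [wt] using (mem_filter.mp (mem_coe.mp hx)).2
  · intro s hs
    rw [mem_coe, mem_filter]
    simpa [wt] using (mem_powersetCard.mp (mem_coe.mp hs)).2
  · intro x _
    funext i
    simp
  · intro s _
    ext i
    simp

theorem exists_perm_comp_eq_of_wt_eq {x y : Fin n → Bool} (h : wt x = wt y) :
    ∃ τ : Equiv.Perm (Fin n), x ∘ τ = y := by
  have hcard : Fintype.card {i // y i = true} = Fintype.card {i // x i = true} := by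
    simpa only [Fintype.card_subtype, wt] using h.symm
  let e := Fintype.equivOfCardEq hcard
  refine ⟨e.extendSubtype, funext fun i => ?_⟩
  by_cases hi : y i = true
  · simpa [hi] using e.extendSubtype_mem i hi
  · simpa [hi] using e.extendSubtype_not_mem i hi

theorem pathPoint_mul (σ π : Equiv.Perm (Fin n)) (j : ℕ) :
    pathPoint (σ * π) j = pathPoint π j ∘ ⇑σ⁻¹ :=
  rfl

def pathsThrough (x : Fin n → Bool) : Finset (Equiv.Perm (Fin n)) :=
  {π | pathPoint π (wt x) = x}

theorem card_pathsThrough_eq_of_wt_eq {x y : Fin n → Bool} (h : wt x = wt y) :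
    #(pathsThrough x) = #(pathsThrough y) := by
  obtain ⟨τ, hτ⟩ := exists_perm_comp_eq_of_wt_eq h
  refine card_equiv (Equiv.mulLeft τ⁻¹) fun π => ?_
  simp only [pathsThrough, mem_filter, mem_univ, true_and, Equiv.coe_mulLeft, pathPoint_mul,
    inv_inv]
  rw [← h, ← hτ]
  exact τ.surjective.injective_comp_right.eq_iff.symm

theorem card_pathsThrough_mul_choose (x : Fin n → Bool) :
    #(pathsThrough x) * n.choose (wt x) = n.factorial := by
  have hfib := card_eq_sum_card_fiberwise (s := univ) (t := {y | wt y = wt x})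
    (f := fun π : Equiv.Perm (Fin n) => pathPoint π (wt x))
    (fun π _ => by simp [wt_pathPoint π (wt_le x)])
  rw [sum_congr rfl fun y hy => show #{π | pathPoint π (wt x) = y} = #(pathsThrough x) by
      rw [← (mem_filter.mp hy).2]; exact card_pathsThrough_eq_of_wt_eq (mem_filter.mp hy).2,
    sum_const, card_filter_wt_eq, card_univ, Fintype.card_perm, Fintype.card_fin] at hfib
  simpa [pathsThrough, mul_comm] using hfib.symm

theorem card_filter_pathPoint_mem (π : Equiv.Perm (Fin n)) (A : Finset (Fin n → Bool)) :
    #{j ∈ range (n + 1) | pathPoint π j ∈ A} = #{x ∈ A | π ∈ pathsThrough x} := by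
  refine card_nbij' (pathPoint π) wt ?_ ?_ ?_ ?_
  · intro j hj
    obtain ⟨hjn, hjA⟩ := mem_filter.mp hj
    have hj' : j ≤ n := Nat.lt_succ_iff.mp (mem_range.mp hjn)
    simpa [pathsThrough, wt_pathPoint π hj'] using hjA
  · intro x hx
    obtain ⟨hxA, hπ⟩ := mem_filter.mp hx
    simp only [pathsThrough, mem_filter, mem_univ, true_and] at hπ
    simpa [hπ, Nat.lt_succ_iff, wt_le] using hxA
  · intro j hj
    exact wt_pathPoint π (Nat.lt_succ_iff.mp (mem_range.mp (mem_filter.mp hj).1))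
  · intro x hx
    simpa [pathsThrough] using (mem_filter.mp hx).2

theorem sum_card_filter_pathPoint_mem (A : Finset (Fin n → Bool)) :
    ∑ π, #{j ∈ range (n + 1) | pathPoint π j ∈ A} = ∑ x ∈ A, #(pathsThrough x) := by
  simp_rw [card_filter_pathPoint_mem, card_filter]
  rw [sum_comm]
  simp [pathsThrough]

theorem sqrt_div_two_pow_le_card_pathsThrough_div (x : Fin n → Bool) :
    √n / 2 ^ n ≤ #(pathsThrough x) / n.factorial := by
  have hcount : (#(pathsThrough x) : ℝ) * n.choose (wt x) = n.factorial := by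
    exact_mod_cast card_pathsThrough_mul_choose x
  rw [div_le_div_iff₀ (by positivity) (by positivity), ← hcount, mul_left_comm]
  exact mul_le_mul_of_nonneg_left (Real.sqrt_mul_choose_le_two_pow n (wt x)) (Nat.cast_nonneg _)

end Paths

theorem expected_pmid_cap_A :
    ∀ n : ℕ, 1 ≤ n → ∀ ε : ℝ, 1 / (n : ℝ) ≤ ε → ε ≤ 1 / 2 →
      ∀ A : Finset (Fin n → Bool), A ⊆ Lmid n ε →
        (A.card : ℝ) * Real.sqrt n / 2 ^ n ≤
          (∑ π : Equiv.Perm (Fin n),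
              (((pmidIdx n ε π).filter (fun j => pathPoint π j ∈ A)).card : ℝ)) /
            (Fintype.card (Equiv.Perm (Fin n)) : ℝ) := by
  intro n _ ε _ _ A hA
  have hmid (π : Equiv.Perm (Fin n)) :
      {j ∈ pmidIdx n ε π | pathPoint π j ∈ A} = {j ∈ range (n + 1) | pathPoint π j ∈ A} := by
    rw [pmidIdx, filter_filter]
    exact filter_congr fun j _ => and_iff_right_of_imp (hA ·)
  calc (#A : ℝ) * √n / 2 ^ n = ∑ _x ∈ A, √n / 2 ^ n := by
        rw [sum_const, nsmul_eq_mul, mul_div_assoc]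
    _ ≤ ∑ x ∈ A, (#(pathsThrough x) : ℝ) / n.factorial :=
        sum_le_sum fun x _ => sqrt_div_two_pow_le_card_pathsThrough_div x
    _ = _ := by
        rw [← sum_div, ← Nat.cast_sum, ← sum_card_filter_pathPoint_mem, Nat.cast_sum,
          Fintype.card_perm, Fintype.card_fin]
        simp only [hmid]
end

section
/- There exists a universal constant C > 0 such that for all n ≥ 2, all ε with 1/n ≤ ε ≤ 1/2, and all integers a, b with (n−d)/2 ≤ b < a ≤ (n+d)/2 (where d = 2⌈√(2n·ln(100/ε))⌉): (1) C(a, a−b) / C(n−b, a−b) ≤ C/ε⁴, and (2) C(n, ⌊n/2⌋) / C(n, a) ≤ C/ε⁴, where C(·,·) denotes the binomial coefficient. -/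
/-!
Writing `a = b + k` and `n = a + c`, the first ratio is `C(b+k,k) / C(c+k,k)`, a product of
the factors `(b+i+1)/(c+i+1) ≤ (b+1)/(c+1)`, hence at most `exp ((b-c)k/(c+1))`. The identity
`C(n,a) C(a,j) = C(n,j) C(n-j,a-j)`, together with symmetry, brings the second ratio to the same
form. When `a, b` lie in the window `|2x - n| ≤ d` the exponent is at most `d(d+1)/(2(n-d+2))`,
which is `4 ln(100/ε) + O(1)` as soon as `n ≥ 128 ln(100n)³`; exponentiating gives `O(ε⁻⁴)`.
The finitely many remaining `n` are covered by `C(m,k) ≤ 2^m`.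
-/

open Real Filter

theorem Nat.ascFactorial_mul_pow_le_pow_mul_ascFactorial {x z : ℕ} (h : z ≤ x) (k : ℕ) :
    x.ascFactorial k * z ^ k ≤ x ^ k * z.ascFactorial k := by
  induction k with
  | zero => simp
  | succ k ih =>
    have step : (x + k) * z ≤ x * (z + k) := by nlinarith
    calc x.ascFactorial (k + 1) * z ^ (k + 1)
        = ((x + k) * z) * (x.ascFactorial k * z ^ k) := by rw [Nat.ascFactorial_succ]; ring
      _ ≤ (x * (z + k)) * (x ^ k * z.ascFactorial k) := Nat.mul_le_mul step ih
      _ = x ^ (k + 1) * z.ascFactorial (k + 1) := by rw [Nat.ascFactorial_succ]; ring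

theorem choose_add_div_choose_add_le_pow {b c : ℕ} (h : c ≤ b) (k : ℕ) :
    ((b + k).choose k : ℝ) / (c + k).choose k ≤ (((b : ℝ) + 1) / (c + 1)) ^ k := by
  have key := Nat.ascFactorial_mul_pow_le_pow_mul_ascFactorial (Nat.succ_le_succ h) k
  rw [Nat.ascFactorial_eq_factorial_mul_choose, Nat.ascFactorial_eq_factorial_mul_choose,
    mul_assoc, mul_left_comm _ k.factorial] at key
  have key' := Nat.le_of_mul_le_mul_left key k.factorial_pos
  have hpos : (0 : ℝ) < (c + k).choose k := by exact_mod_cast Nat.choose_pos (by omega)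
  rw [div_le_iff₀ hpos, div_pow, div_mul_eq_mul_div, le_div_iff₀ (by positivity)]
  exact_mod_cast key'

theorem choose_add_div_choose_add_le_exp (b c k : ℕ) {T : ℝ} (hT : 0 ≤ T)
    (h : ((b : ℝ) - c) * k ≤ T * (c + 1)) :
    ((b + k).choose k : ℝ) / (c + k).choose k ≤ exp T := by
  rcases le_total b c with hbc | hcb
  · refine (div_le_one_of_le₀ ?_ (Nat.cast_nonneg _)).trans (one_le_exp hT)
    exact_mod_cast Nat.choose_le_choose k (by omega)
  · have hc : (0 : ℝ) < c + 1 := by positivity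
    calc ((b + k).choose k : ℝ) / (c + k).choose k
        ≤ (((b : ℝ) + 1) / (c + 1)) ^ k := choose_add_div_choose_add_le_pow hcb k
      _ = (((b : ℝ) - c) / (c + 1) + 1) ^ k := by field_simp; ring
      _ ≤ exp (((b : ℝ) - c) / (c + 1)) ^ k := by
        gcongr
        · have : (c : ℝ) ≤ b := by exact_mod_cast hcb
          have : 0 ≤ ((b : ℝ) - c) / (c + 1) := by positivity
          linarith
        · exact add_one_le_exp _
      _ = exp (((b : ℝ) - c) * k / (c + 1)) := by rw [← exp_nat_mul]; ring_nf
      _ ≤ exp T := exp_le_exp.2 ((div_le_iff₀ hc).2 h)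

theorem choose_div_choose_add_eq (j k c : ℕ) :
    ((j + k + c).choose j : ℝ) / (j + k + c).choose (j + k) =
      (j + k).choose k / (c + k).choose k := by
  have h := Nat.choose_mul (n := j + k + c) (Nat.le_add_right j k)
  rw [Nat.choose_symm_add (a := j) (b := k), show j + k + c - j = c + k by omega,
    Nat.add_sub_cancel_left] at h
  have h₁ : ((j + k + c).choose (j + k) : ℝ) ≠ 0 := by
    exact_mod_cast (Nat.choose_pos (by omega)).ne'
  have h₂ : ((c + k).choose k : ℝ) ≠ 0 := by exact_mod_cast (Nat.choose_pos (by omega)).ne'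
  rw [div_eq_div_iff h₁ h₂, mul_comm ((j + k).choose k : ℝ)]
  exact_mod_cast h.symm

theorem choose_div_choose_le_exp {n j a : ℕ} (hja : j ≤ a) (han : a ≤ n) {T : ℝ} (hT : 0 ≤ T)
    (h : ((j : ℝ) + a - n) * (a - j) ≤ T * (n - a + 1)) :
    (n.choose j : ℝ) / n.choose a ≤ exp T := by
  obtain ⟨k, rfl⟩ := Nat.exists_eq_add_of_le hja
  obtain ⟨c, rfl⟩ := Nat.exists_eq_add_of_le han
  rw [choose_div_choose_add_eq]
  refine choose_add_div_choose_add_le_exp j c k hT ?_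
  convert h using 2 <;> push_cast <;> ring

section Window

variable {n : ℕ} {D T : ℝ}

theorem choose_sub_div_choose_sub_le_exp_of_window (hT : 0 ≤ T)
    (hD : D * (D + 1) ≤ 2 * T * (n - D + 2)) {a b : ℕ} (hb : (n - D) / 2 ≤ (b : ℝ))
    (hba : b < a) (ha : (a : ℝ) ≤ (n + D) / 2) (han : a ≤ n) :
    (a.choose (a - b) : ℝ) / (n - b).choose (a - b) ≤ exp T := by
  obtain ⟨k, rfl⟩ := Nat.exists_eq_add_of_le hba.le
  obtain ⟨c, rfl⟩ := Nat.exists_eq_add_of_le han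
  rw [show b + k - b = k by omega, show b + k + c - b = c + k by omega]
  refine choose_add_div_choose_add_le_exp b c k hT ?_
  push_cast at hb ha hD
  have hsq : ((b : ℝ) + k - c) ^ 2 ≤ D ^ 2 := sq_le_sq' (by linarith) (by linarith)
  have hc : ((b : ℝ) + k + c - D + 2) / 2 ≤ c + 1 := by linarith
  have hD₀ : 0 ≤ D := by linarith [(Nat.cast_lt (α := ℝ)).2 hba]
  calc ((b : ℝ) - c) * k = (((b : ℝ) + k - c) ^ 2 - ((b : ℝ) - k - c) ^ 2) / 4 := by ring
    _ ≤ D * (D + 1) / 4 := by nlinarith [sq_nonneg ((b : ℝ) - k - c)]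
    _ ≤ T * (c + 1) := by nlinarith [mul_le_mul_of_nonneg_left hc hT]

theorem choose_half_div_choose_le_exp_of_window (hT : 0 ≤ T)
    (hD : D * (D + 1) ≤ 2 * T * (n - D + 2)) {a : ℕ} (ha₁ : (n - D) / 2 ≤ (a : ℝ))
    (ha₂ : (a : ℝ) ≤ (n + D) / 2) (han : a ≤ n) :
    (n.choose (n / 2) : ℝ) / n.choose a ≤ exp T := by
  have hm₁ : 2 * ((n / 2 : ℕ) : ℝ) ≤ n := by exact_mod_cast Nat.mul_div_le n 2
  have hm₂ : (n : ℝ) ≤ 2 * ((n / 2 : ℕ) : ℝ) + 1 := by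
    exact_mod_cast (by omega : n ≤ 2 * (n / 2) + 1)
  rcases le_total (n / 2) a with hma | ham
  · have : ((n / 2 : ℕ) : ℝ) ≤ a := by exact_mod_cast hma
    refine choose_div_choose_le_exp hma han hT ?_
    nlinarith
  · have hmn : n / 2 ≤ n := Nat.div_le_self n 2
    have : (a : ℝ) ≤ ((n / 2 : ℕ) : ℝ) := by exact_mod_cast ham
    rw [← Nat.choose_symm hmn, ← Nat.choose_symm han]
    refine choose_div_choose_le_exp (by omega) (Nat.sub_le n a) hT ?_
    rw [Nat.cast_sub hmn, Nat.cast_sub han]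
    nlinarith

end Window

theorem mul_add_one_le_of_le_two_sqrt {n L D : ℝ} (hL : 1 ≤ L) (hn : 128 * L ^ 3 ≤ n)
    (hD₀ : 0 ≤ D) (hD : D ≤ 2 * √(2 * n * L) + 2) :
    D * (D + 1) ≤ 2 * (4 * L + 20) * (n - D + 2) := by
  set s := √(2 * n * L)
  have hs₀ : 0 ≤ s := sqrt_nonneg _
  have hL₃ : L ≤ L ^ 3 := le_self_pow₀ hL (by norm_num)
  have hs : s ^ 2 = 2 * n * L := sq_sqrt (by nlinarith)
  have hLs : L * s ≤ n / 8 := by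
    have : (L * s) ^ 2 ≤ (n / 8) ^ 2 := by nlinarith
    exact le_of_sq_le_sq (by linarith) (by nlinarith)
  have hsn : s ≤ n / 8 := by nlinarith
  calc D * (D + 1) ≤ (2 * s + 2) * (2 * s + 3) :=
      mul_le_mul hD (by linarith) (by positivity) (by positivity)
    _ ≤ 2 * (4 * L + 20) * (n - 2 * s) := by nlinarith
    _ ≤ 2 * (4 * L + 20) * (n - D + 2) := by gcongr; linarith

theorem eventually_mul_log_pow_three_le :
    ∀ᶠ n : ℕ in atTop, 128 * log (100 * n) ^ 3 ≤ n := by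
  have hlog := tendsto_pow_log_div_mul_add_atTop (1 / 100) 0 3 (by norm_num)
  have h100 : Tendsto (fun n : ℕ => 100 * (n : ℝ)) atTop atTop :=
    tendsto_natCast_atTop_atTop.const_mul_atTop (by norm_num)
  have hratio := (hlog.comp h100).eventually (eventually_le_nhds (by norm_num : (0 : ℝ) < 1 / 128))
  filter_upwards [hratio, eventually_gt_atTop 0] with n hn hn₀
  have hn₀' : (0 : ℝ) < n := by exact_mod_cast hn₀
  simp only [Function.comp, show 1 / 100 * (100 * (n : ℝ)) + 0 = n by ring] at hn
  rw [div_le_iff₀ hn₀'] at hn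
  linarith

theorem dPar_mul_add_one_le {n : ℕ} (hn₀ : 0 < n) (hn : 128 * log (100 * n) ^ 3 ≤ n) {ε : ℝ}
    (hε₁ : 1 / (n : ℝ) ≤ ε) (hε₂ : ε ≤ 1 / 2) :
    (dPar n ε : ℝ) * (dPar n ε + 1) ≤ 2 * (4 * log (100 / ε) + 20) * (n - dPar n ε + 2) := by
  have hn₀' : (0 : ℝ) < n := by exact_mod_cast hn₀
  have hε₀ : 0 < ε := (one_div_pos.2 hn₀').trans_le hε₁
  have hL₁ : 1 ≤ log (100 / ε) := by
    rw [le_log_iff_exp_le (by positivity), le_div_iff₀ hε₀]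
    nlinarith [exp_one_lt_d9]
  have hLn : log (100 / ε) ≤ log (100 * n) := by
    refine log_le_log (by positivity) ?_
    rw [div_le_iff₀ hn₀'] at hε₁
    rw [div_le_iff₀ hε₀]
    linarith
  have hceil := Nat.ceil_lt_add_one (sqrt_nonneg (2 * n * log (100 / ε)))
  refine mul_add_one_le_of_le_two_sqrt hL₁ ?_ (Nat.cast_nonneg _) ?_
  · calc 128 * log (100 / ε) ^ 3 ≤ 128 * log (100 * n) ^ 3 := by gcongr
      _ ≤ (n : ℝ) := hn
  · simp only [dPar, Nat.cast_mul, Nat.cast_ofNat]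
    linarith

theorem exp_four_mul_log_add (ε : ℝ) (hε : 0 < ε) (c : ℝ) :
    exp (4 * log (100 / ε) + c) = 10 ^ 8 * exp c / ε ^ 4 := by
  rw [exp_add, show 4 * log (100 / ε) = ((4 : ℕ) : ℝ) * log (100 / ε) by norm_num, exp_nat_mul,
    exp_log (by positivity)]
  field_simp
  norm_num

theorem choose_div_le_two_pow (m k B : ℕ) : (m.choose k : ℝ) / B ≤ 2 ^ m := by
  rcases B.eq_zero_or_pos with rfl | hB
  · simp
  · calc (m.choose k : ℝ) / B ≤ m.choose k :=
          div_le_self (Nat.cast_nonneg _) (by exact_mod_cast hB)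
      _ ≤ 2 ^ m := by exact_mod_cast Nat.choose_le_two_pow m k

theorem binomial_ratio_bounds :
    ∃ C : ℝ, 0 < C ∧ ∀ n : ℕ, 2 ≤ n → ∀ ε : ℝ, 1 / (n : ℝ) ≤ ε → ε ≤ 1 / 2 →
      ∀ a b : ℕ,
        ((n : ℝ) - dPar n ε) / 2 ≤ (b : ℝ) → b < a → (a : ℝ) ≤ ((n : ℝ) + dPar n ε) / 2 →
        ((a.choose (a - b) : ℝ) / ((n - b).choose (a - b) : ℝ) ≤ C / ε ^ 4) ∧
        ((n.choose (n / 2) : ℝ) / (n.choose a : ℝ) ≤ C / ε ^ 4) := by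
  obtain ⟨N, hN⟩ := eventually_atTop.1 eventually_mul_log_pow_three_le
  refine ⟨2 ^ N + 10 ^ 8 * exp 20, by positivity, ?_⟩
  intro n hn ε hε₁ hε₂ a b hb hba ha
  have hε₀ : 0 < ε := (one_div_pos.2 (by positivity)).trans_le hε₁
  rcases lt_or_ge n a with hna | han
  · rw [Nat.choose_eq_zero_of_lt (by omega : n - b < a - b), Nat.choose_eq_zero_of_lt hna]
    simp only [Nat.cast_zero, div_zero]
    exact ⟨by positivity, by positivity⟩
  rcases lt_or_ge n N with hnN | hNn
  · have hsmall : ∀ m ≤ n, ∀ k B : ℕ,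
        (m.choose k : ℝ) / B ≤ (2 ^ N + 10 ^ 8 * exp 20) / ε ^ 4 := fun m hm k B =>
      (choose_div_le_two_pow m k B).trans <| (pow_le_pow_right₀ one_le_two (by omega)).trans <|
        (le_add_of_nonneg_right (by positivity)).trans <|
          le_div_self (by positivity) (by positivity) (pow_le_one₀ hε₀.le (by linarith))
    exact ⟨hsmall a han _ _, hsmall n le_rfl _ _⟩
  have hT : 0 ≤ 4 * log (100 / ε) + 20 := by
    have : 0 ≤ log (100 / ε) := log_nonneg (by rw [le_div_iff₀ hε₀]; linarith)
    linarith
  have hD := dPar_mul_add_one_le (by omega) (hN n hNn) hε₁ hε₂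
  have hexp : exp (4 * log (100 / ε) + 20) ≤ (2 ^ N + 10 ^ 8 * exp 20) / ε ^ 4 := by
    rw [exp_four_mul_log_add ε hε₀]
    gcongr
    exact le_add_of_nonneg_left (by positivity)
  have ha₁ : ((n : ℝ) - dPar n ε) / 2 ≤ a := hb.trans (by exact_mod_cast hba.le)
  exact ⟨(choose_sub_div_choose_sub_le_exp_of_window hT hD hb hba ha han).trans hexp,
    (choose_half_div_choose_le_exp_of_window hT hD ha₁ ha han).trans hexp⟩
end
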